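/- Let n ≥ 3, c > 0, and suppose 0 < ε < (1/(nc))^{2/(n−2)} · (n/(n−1))^{n/(n−2)}. Then the unique positive root ρ₁ of cρⁿ + ρ² − ε = 0 satisfies ((n−1)/n)^{1/2}·√ε < ρ₁ < √ε. -/

import Mathlib

/-!
The map `x ↦ c xⁿ + x²` is strictly increasing on `[0, ∞)`, so `ρ₁` exceeds `r₀ = √((n-1)ε/n)`
as soon as `c r₀ⁿ + r₀² < ε`, that is `c ((n-1)ε/n)^(n/2) < ε/n`. Raising both sides to the
power `2/(n-2)` shows that this is exactly the hypothesis on `ε`. The upper bound is just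
`ρ₁² = ε - c ρ₁ⁿ < ε`.
-/

open Real

theorem strictMonoOn_mul_pow_add_sq {c : ℝ} (hc : 0 ≤ c) (n : ℕ) :
    StrictMonoOn (fun x : ℝ => c * x ^ n + x ^ 2) (Set.Ici 0) := by
  intro x hx y _ hxy
  exact add_lt_add_of_le_of_lt (mul_le_mul_of_nonneg_left (pow_le_pow_left₀ hx hxy.le n) hc)
    (pow_lt_pow_left₀ hxy hx two_ne_zero)

theorem sqrt_pow_eq_rpow {x : ℝ} (hx : 0 ≤ x) (n : ℕ) : √x ^ n = x ^ ((n : ℝ) / 2) := by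
  rw [sqrt_eq_rpow, ← rpow_natCast, ← rpow_mul hx]
  ring_nf

theorem lt_rpow_mul_rpow_iff_div_rpow_lt {x a b m : ℝ} (hx : 0 < x) (ha : 0 < a) (hb : 0 < b)
    (hm : 1 < m) :
    x < a ^ (1 / (m - 1)) * b ^ (m / (m - 1)) ↔ (x / b) ^ m < a * x := by
  have hm1 : 0 < m - 1 := sub_pos.2 hm
  have hpow : (a ^ (1 / (m - 1)) * b ^ (m / (m - 1))) ^ (m - 1) = a * b ^ m := by
    rw [mul_rpow (by positivity) (by positivity), ← rpow_mul ha.le, ← rpow_mul hb.le,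
      div_mul_cancel₀ _ hm1.ne', div_mul_cancel₀ _ hm1.ne', rpow_one]
  calc x < a ^ (1 / (m - 1)) * b ^ (m / (m - 1))
      ↔ x ^ (m - 1) < (a ^ (1 / (m - 1)) * b ^ (m / (m - 1))) ^ (m - 1) :=
        (rpow_lt_rpow_iff hx.le (by positivity) hm1).symm
    _ ↔ x ^ m < a * x * b ^ m := by
        rw [hpow, rpow_sub_one hx.ne', div_lt_iff₀ hx, mul_right_comm]
    _ ↔ (x / b) ^ m < a * x := by
        rw [div_rpow hx.le hb.le, div_lt_iff₀ (by positivity)]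

/-- For `n ≥ 3`, `c > 0` and `0 < ε < (1/(nc))^(2/(n-2))·(n/(n-1))^(n/(n-2))`, the unique
positive root `ρ₁` of `cρⁿ + ρ² − ε = 0` satisfies `√((n-1)/n)·√ε < ρ₁ < √ε`. -/
theorem bounds_rho_one (n : ℕ) (hn : 3 ≤ n) (c ε : ℝ) (hc : 0 < c) (hε : 0 < ε)
    (hεb : ε < (1 / (n * c)) ^ ((2 : ℝ) / ((n : ℝ) - 2)) *
      ((n : ℝ) / ((n : ℝ) - 1)) ^ ((n : ℝ) / ((n : ℝ) - 2))) :
    ∀ ρ₁ : ℝ, 0 < ρ₁ → c * ρ₁ ^ n + ρ₁ ^ 2 - ε = 0 →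
      Real.sqrt (((n : ℝ) - 1) / n) * Real.sqrt ε < ρ₁ ∧ ρ₁ < Real.sqrt ε := by
  intro ρ₁ hρ hroot
  have hN : (3 : ℝ) ≤ n := by exact_mod_cast hn
  set b : ℝ := n / (n - 1) with hb
  have hb0 : 0 < b := div_pos (by linarith) (by linarith)
  have hr₀ : √(((n : ℝ) - 1) / n) * √ε = √(ε / b) := by
    rw [← sqrt_mul (div_nonneg (by linarith) (by linarith)), hb]
    congr 1
    field_simp
  have hthreshold : (ε / b) ^ ((n : ℝ) / 2) < 1 / (n * c) * ε := by
    refine (lt_rpow_mul_rpow_iff_div_rpow_lt hε (by positivity) hb0 (by linarith)).1 ?_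
    convert hεb using 3 <;> field_simp
  have hvalue : c * √(ε / b) ^ n + √(ε / b) ^ 2 < c * ρ₁ ^ n + ρ₁ ^ 2 := by
    rw [sqrt_pow_eq_rpow (by positivity), sq_sqrt (by positivity), sub_eq_zero.1 hroot]
    have hcX := mul_lt_mul_of_pos_left hthreshold hc
    have hsplit : c * (1 / (n * c) * ε) + ε / b = ε := by
      rw [hb]
      field_simp
      ring
    linarith
  refine ⟨?_, ?_⟩
  · rw [hr₀]
    exact (strictMonoOn_mul_pow_add_sq hc.le n).lt_iff_lt (sqrt_nonneg _) hρ.le |>.1 hvalue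
  · rw [lt_sqrt hρ.le]
    nlinarith [pow_pos hρ n]
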